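/- arXiv:0803.2699 — 7 statements merged into one kernel-verified Lean document; each statement's English description precedes it below -/
import Mathlib

section
/- Let ℓ be a positive integer and let λ = (λ_1,…,λ_ℓ) and μ = (μ_1,…,μ_ℓ) be non-increasing sequences of non-negative integers with the same weight, i.e. λ_1+⋯+λ_ℓ = μ_1+⋯+μ_ℓ. If λ dominates μ, then for every positive integer k the sequence λ^(k) dominates μ^(k). -/
/-- `Dominates l m` : `l` dominates `m`, i.e. all partial sums of `l` are at
least the corresponding partial sums of `m` (entries beyond the length count as 0). -/
def Dominates (l m : List ℕ) : Prop := ∀ i : ℕ, (m.take i).sum ≤ (l.take i).sum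

/-- `opk k l` is the sequence `l^(k)` : the values `|lᵢ - k|` reordered in
non-increasing order. -/
def opk (k : ℕ) (l : List ℕ) : List ℕ :=
  (l.map (fun x => Nat.dist x k)).insertionSort (· ≥ ·)

/-!
Fix `i`. The first `i` entries of `m^(k)` are `|mⱼ - k|` for some `a` entries of `m` that are
`≥ k` and `b` entries that are `< k`, with `a + b ≤ i`. As `m` is non-increasing, their sum is at
most `endsSum k m a b`: the sum of the `a` largest entries of `m` minus `a k`, plus `b k` minus
the sum of the `b` smallest entries. Dominance and equal weight make initial sums of `l` larger
and final sums smaller, so `endsSum k m a b ≤ endsSum k l a b`; and since `|x - k| ≥ ±(x - k)`,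
the first `a` and last `b` entries of any `l` show that `endsSum k l a b` is at most the sum of the
`a + b ≤ i` largest entries of `l^(k)`.
-/

open List

section SortedSum

variable {M : Type*} [AddCommMonoid M] [PartialOrder M] [IsOrderedCancelAddMonoid M]

theorem List.Pairwise.sum_take_tail_le {a : M} {s : List M} (h : (a :: s).Pairwise (· ≥ ·))
    {n : ℕ} (hn : n ≤ s.length) : (s.take n).sum ≤ ((a :: s).take n).sum := by
  induction s generalizing a n with
  | nil => simp_all
  | cons b s ih =>
    cases n with
    | zero => simp
    | succ n =>
      simp only [take_succ_cons, sum_cons]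
      exact add_le_add (rel_of_pairwise_cons h mem_cons_self)
        (ih h.of_cons (Nat.le_of_succ_le_succ hn))

theorem List.Sublist.sum_le_sum_take_of_pairwise_ge {t s : List M} (hts : t <+ s)
    (hs : s.Pairwise (· ≥ ·)) : t.sum ≤ (s.take t.length).sum := by
  induction hts with
  | slnil => simp
  | cons a hts ih => exact (ih hs.of_cons).trans (hs.sum_take_tail_le hts.length_le)
  | cons_cons a _ ih =>
    simpa only [length_cons, take_succ_cons, sum_cons] using add_le_add_right (ih hs.of_cons) a

theorem List.Subperm.sum_le_sum_take_of_pairwise_ge {t s : List M} (hts : t <+~ s)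
    (hs : s.Pairwise (· ≥ ·)) : t.sum ≤ (s.take t.length).sum := by
  obtain ⟨t', hperm, hsub⟩ := hts
  rw [← hperm.sum_eq, ← hperm.length_eq]
  exact hsub.sum_le_sum_take_of_pairwise_ge hs

theorem List.Sublist.sum_drop_le_of_pairwise_ge {t s : List M} (hts : t <+ s)
    (hs : s.Pairwise (· ≥ ·)) : (s.drop (s.length - t.length)).sum ≤ t.sum := by
  -- compare the complement `c` of `t` with the initial segment of the same length
  obtain ⟨c, hperm⟩ := hts.exists_perm_append
  have hlen : c.length = s.length - t.length := by
    rw [hperm.length_eq, length_append]; omega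
  have hc : c.sum ≤ (s.take c.length).sum :=
    ((sublist_append_right t c).subperm.trans hperm.symm.subperm).sum_le_sum_take_of_pairwise_ge
      hs
  have htotal : t.sum + c.sum = (s.drop c.length).sum + (s.take c.length).sum := by
    rw [← sum_append, ← hperm.sum_eq, add_comm, sum_take_add_sum_drop]
  rw [← hlen]
  refine le_of_add_le_add_right (a := (s.take c.length).sum) ?_
  calc (s.drop c.length).sum + (s.take c.length).sum = t.sum + c.sum := htotal.symm
    _ ≤ t.sum + (s.take c.length).sum := by gcongr

end SortedSum

section Dist

variable {k : ℕ}

theorem sum_map_dist_eq_of_le {s : List ℕ} (h : ∀ x ∈ s, k ≤ x) :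
    (((s.map (Nat.dist · k)).sum : ℕ) : ℤ) = s.sum - s.length * k := by
  induction s with
  | nil => simp
  | cons x s ih =>
    simp only [forall_mem_cons] at h
    have hx : x.dist k = x - k + (k - x) := rfl
    simp only [map_cons, sum_cons, length_cons, Nat.cast_add, Nat.cast_succ, add_mul, one_mul,
      ih h.2]
    omega

theorem sum_map_dist_eq_of_ge {s : List ℕ} (h : ∀ x ∈ s, x ≤ k) :
    (((s.map (Nat.dist · k)).sum : ℕ) : ℤ) = s.length * k - s.sum := by
  induction s with
  | nil => simp
  | cons x s ih =>
    simp only [forall_mem_cons] at h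
    have hx : x.dist k = x - k + (k - x) := rfl
    simp only [map_cons, sum_cons, length_cons, Nat.cast_add, Nat.cast_succ, add_mul, one_mul,
      ih h.2]
    omega

theorem sum_sub_le_sum_map_dist (s : List ℕ) :
    (s.sum : ℤ) - s.length * k ≤ (((s.map (Nat.dist · k)).sum : ℕ) : ℤ) := by
  induction s with
  | nil => simp
  | cons x s ih =>
    have hx : x.dist k = x - k + (k - x) := rfl
    simp only [map_cons, sum_cons, length_cons, Nat.cast_add, Nat.cast_succ, add_mul, one_mul]
    omega

theorem length_mul_sub_sum_le_sum_map_dist (s : List ℕ) :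
    (s.length * k : ℤ) - s.sum ≤ (((s.map (Nat.dist · k)).sum : ℕ) : ℤ) := by
  induction s with
  | nil => simp
  | cons x s ih =>
    have hx : x.dist k = x - k + (k - x) := rfl
    simp only [map_cons, sum_cons, length_cons, Nat.cast_add, Nat.cast_succ, add_mul, one_mul]
    omega

end Dist

/-- When the first `a` entries of `s` are `≥ k` and the last `b` entries are `≤ k`, this is the
sum of `|sⱼ - k|` over those `a + b` entries. -/
def endsSum (k : ℕ) (s : List ℕ) (a b : ℕ) : ℤ :=
  ((s.take a).sum - a * k : ℤ) + (b * k - (s.drop (s.length - b)).sum : ℤ)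

theorem perm_opk (k : ℕ) (l : List ℕ) : opk k l ~ l.map (Nat.dist · k) :=
  perm_insertionSort _ _

theorem pairwise_opk (k : ℕ) (l : List ℕ) : (opk k l).Pairwise (· ≥ ·) :=
  pairwise_insertionSort _ _

theorem endsSum_le_sum_take_opk (k : ℕ) {l : List ℕ} {a b i : ℕ} (hab : a + b ≤ l.length)
    (hi : a + b ≤ i) : endsSum k l a b ≤ (((opk k l).take i).sum : ℤ) := by
  set w := l.take a ++ l.drop (l.length - b)
  have hw : w <+ l :=
    calc w <+ l.take (l.length - b) ++ l.drop (l.length - b) :=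
          (take_sublist_take_left (by omega)).append_right _
      _ = l := take_append_drop _ _
  have hwlen : (w.map (Nat.dist · k)).length = a + b := by
    simp only [w, length_map, length_append, length_take, length_drop]; omega
  have hsub : w.map (Nat.dist · k) <+~ opk k l :=
    (hw.map _).subperm.trans (perm_opk k l).symm.subperm
  calc endsSum k l a b ≤ (((w.map (Nat.dist · k)).sum : ℕ) : ℤ) := by
        have hfront := sum_sub_le_sum_map_dist (k := k) (l.take a)
        have hback := length_mul_sub_sum_le_sum_map_dist (k := k) (l.drop (l.length - b))
        rw [length_take_of_le (by omega)] at hfront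
        rw [length_drop, Nat.sub_sub_self (by omega)] at hback
        rw [map_append, sum_append, Nat.cast_add, endsSum]
        omega
    _ ≤ (((opk k l).take (a + b)).sum : ℤ) := by
        exact_mod_cast hwlen ▸ hsub.sum_le_sum_take_of_pairwise_ge (pairwise_opk k l)
    _ ≤ (((opk k l).take i).sum : ℤ) := by exact_mod_cast monotone_sum_take _ hi

theorem exists_sublist_perm_take_opk (k : ℕ) (m : List ℕ) (i : ℕ) :
    ∃ s, s <+ m ∧ s.length ≤ i ∧ (opk k m).take i ~ s.map (Nat.dist · k) := by
  obtain ⟨t, hperm, hsub⟩ := (take_sublist i _).subperm.trans (perm_opk k m).subperm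
  obtain ⟨s, hs, rfl⟩ := sublist_map_iff.mp hsub
  refine ⟨s, hs, ?_, hperm.symm⟩
  rw [← length_map (f := (Nat.dist · k)), hperm.length_eq]
  exact length_take_le _ _

theorem sum_map_dist_le_endsSum (k : ℕ) {m s : List ℕ} (hm : m.Pairwise (· ≥ ·)) (hs : s <+ m) :
    ∃ a b, a + b = s.length ∧ (((s.map (Nat.dist · k)).sum : ℕ) : ℤ) ≤ endsSum k m a b := by
  set above := s.filter (k ≤ ·)
  set below := s.filter (fun x => !decide (k ≤ x))
  have hperm : above ++ below ~ s := filter_append_perm _ _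
  refine ⟨above.length, below.length, by rw [← length_append, hperm.length_eq], ?_⟩
  have habove : above.sum ≤ (m.take above.length).sum :=
    (filter_sublist.trans hs).sum_le_sum_take_of_pairwise_ge hm
  have hbelow : (m.drop (m.length - below.length)).sum ≤ below.sum :=
    (filter_sublist.trans hs).sum_drop_le_of_pairwise_ge hm
  rw [← (hperm.map _).sum_eq, map_append, sum_append, Nat.cast_add,
    sum_map_dist_eq_of_le (fun x hx => by simp [above] at hx; omega),
    sum_map_dist_eq_of_ge (fun x hx => by simp [below] at hx; omega), endsSum]
  omega

theorem Dominates.sum_drop_le {l m : List ℕ} (h : Dominates l m) (hw : l.sum = m.sum) (j : ℕ) :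
    (l.drop j).sum ≤ (m.drop j).sum := by
  have := h j
  have := sum_take_add_sum_drop l j
  have := sum_take_add_sum_drop m j
  omega

theorem endsSum_le_endsSum_of_dominates {l m : List ℕ} (h : Dominates l m) (hw : l.sum = m.sum)
    (hlen : l.length = m.length) (k a b : ℕ) : endsSum k m a b ≤ endsSum k l a b := by
  have := h a
  have := h.sum_drop_le hw (m.length - b)
  rw [endsSum, endsSum, hlen]
  omega

theorem dominance_preserved_under_opk_general
    (ℓ : ℕ) (l m : List ℕ)
    (hllen : l.length = ℓ) (hmlen : m.length = ℓ)
    (hmsort : m.Pairwise (· ≥ ·))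
    (hweight : l.sum = m.sum) (hdom : Dominates l m)
    (k : ℕ) :
    Dominates (opk k l) (opk k m) := by
  intro i
  obtain ⟨s, hsm, hsi, hperm⟩ := exists_sublist_perm_take_opk k m i
  obtain ⟨a, b, hab, hbound⟩ := sum_map_dist_le_endsSum k hmsort hsm
  have hlen : l.length = m.length := hllen.trans hmlen.symm
  have habl : a + b ≤ l.length := hab ▸ hlen ▸ hsm.length_le
  suffices (((opk k m).take i).sum : ℤ) ≤ (((opk k l).take i).sum : ℤ) by exact_mod_cast this
  calc (((opk k m).take i).sum : ℤ) = (((s.map (Nat.dist · k)).sum : ℕ) : ℤ) := by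
        rw [hperm.sum_eq]
    _ ≤ endsSum k m a b := hbound
    _ ≤ endsSum k l a b := endsSum_le_endsSum_of_dominates hdom hweight hlen k a b
    _ ≤ (((opk k l).take i).sum : ℤ) := endsSum_le_sum_take_opk k habl (hab ▸ hsi)

theorem dominance_preserved_under_opk
    (ℓ : ℕ) (hℓ : 0 < ℓ) (l m : List ℕ)
    (hllen : l.length = ℓ) (hmlen : m.length = ℓ)
    (hlsort : l.Pairwise (· ≥ ·)) (hmsort : m.Pairwise (· ≥ ·))
    (hweight : l.sum = m.sum) (hdom : Dominates l m)
    (k : ℕ) (hk : 0 < k) :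
    Dominates (opk k l) (opk k m) :=
  dominance_preserved_under_opk_general ℓ l m hllen hmlen hmsort hweight hdom k
end

section
/- Let λ and μ be partitions of the same weight n, completed with zeroes so that both have length ℓ. If λ covers μ in the dominance order on partitions of n (i.e. λ > μ and there is no partition ν of n with λ > ν > μ), then for every positive integer k the sequence λ^(k) dominates μ^(k). -/
open List

namespace List

variable {α : Type*} [AddCommMonoid α] [PartialOrder α] [IsOrderedAddMonoid α]

theorem Sublist.sum_le_sum_take {t u : List α} (h : t <+ u) (hu : u.Pairwise (· ≥ ·)) :
    t.sum ≤ (u.take t.length).sum := by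
  induction h with
  | slnil => simp
  | @cons t u a h ih =>
    obtain ⟨ha, hu⟩ := pairwise_cons.mp hu
    cases t with
    | nil => simp
    | cons x t =>
      have hlen : t.length < u.length := h.length_le
      calc (x :: t).sum ≤ (u.take (t.length + 1)).sum := ih hu
        _ = u[t.length] + (u.take t.length).sum := by rw [sum_take_succ u _ hlen, add_comm]
        _ ≤ a + (u.take t.length).sum := by gcongr; exact ha _ (getElem_mem _)
        _ = ((a :: u).take (x :: t).length).sum := by simp
  | cons_cons a h ih =>
    simpa using add_le_add_right (ih (pairwise_cons.mp hu).2) a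

theorem Subperm.sum_le_sum_take {t u : List α} (h : t <+~ u) (hu : u.Pairwise (· ≥ ·)) :
    t.sum ≤ (u.take t.length).sum := by
  obtain ⟨t', hperm, hsub⟩ := h
  simpa only [hperm.sum_eq, hperm.length_eq] using hsub.sum_le_sum_take hu

theorem Sublist.sum_drop_le {t u : List α} (h : t <+ u) (hu : u.Pairwise (· ≥ ·)) :
    (u.drop (u.length - t.length)).sum ≤ t.sum := by
  have hdual := Sublist.sum_le_sum_take (α := αᵒᵈ) h.reverse (pairwise_reverse.mpr hu)
  change (u.reverse.take t.reverse.length).sum ≤ t.reverse.sum at hdual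
  simpa [take_reverse] using hdual

end List

section Dist

variable (k : ℕ)

theorem sum_le_sum_map_dist_add (A : List ℕ) :
    A.sum ≤ (A.map (fun x => Nat.dist x k)).sum + A.length * k := by
  induction A with
  | nil => simp
  | cons x A ih =>
    simp only [map_cons, sum_cons, length_cons, add_one_mul]
    have := Nat.dist_tri_left' x k
    omega

theorem length_mul_le_sum_map_dist_add (B : List ℕ) :
    B.length * k ≤ (B.map (fun x => Nat.dist x k)).sum + B.sum := by
  induction B with
  | nil => simp
  | cons x B ih =>
    simp only [map_cons, sum_cons, length_cons, add_one_mul]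
    have := Nat.dist_tri_left x k
    omega

theorem sum_map_dist_add_length_mul {A : List ℕ} (h : ∀ x ∈ A, k ≤ x) :
    (A.map (fun x => Nat.dist x k)).sum + A.length * k = A.sum := by
  induction A with
  | nil => simp
  | cons x A ih =>
    simp only [map_cons, sum_cons, length_cons, add_one_mul, forall_mem_cons] at h ⊢
    rw [Nat.dist_eq_sub_of_le_right h.1, ← ih h.2]
    omega

theorem sum_map_dist_add_sum {B : List ℕ} (h : ∀ x ∈ B, x ≤ k) :
    (B.map (fun x => Nat.dist x k)).sum + B.sum = B.length * k := by
  induction B with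
  | nil => simp
  | cons x B ih =>
    simp only [map_cons, sum_cons, length_cons, add_one_mul, forall_mem_cons] at h ⊢
    rw [Nat.dist_eq_sub_of_le h.1, ← ih h.2]
    omega

/-- Split `t` into its parts `≥ k` (`a` of them) and `< k` (`b` of them). -/
theorem List.Sublist.exists_sum_map_dist_le {t M : List ℕ} (h : t <+ M)
    (hM : M.Pairwise (· ≥ ·)) :
    ∃ a b, a + b = t.length ∧
      (t.map (fun x => Nat.dist x k)).sum + a * k + (M.drop (M.length - b)).sum ≤
        (M.take a).sum + b * k := by
  set A := t.filter (fun x => k ≤ x)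
  set B := t.filter (fun x => !decide (k ≤ x))
  have hperm : A ++ B ~ t := filter_append_perm _ t
  have htop : A.sum ≤ (M.take A.length).sum := (filter_sublist.trans h).sum_le_sum_take hM
  have hbot : (M.drop (M.length - B.length)).sum ≤ B.sum :=
    (filter_sublist.trans h).sum_drop_le hM
  have hA := sum_map_dist_add_length_mul k (A := A) (by simp [A])
  have hB := sum_map_dist_add_sum k (B := B) (fun x hx => by simp [B] at hx; omega)
  have hsplit : (t.map (fun x => Nat.dist x k)).sum =
      (A.map (fun x => Nat.dist x k)).sum + (B.map (fun x => Nat.dist x k)).sum := by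
    rw [← sum_append, ← map_append, ((hperm.map _).sum_eq)]
  exact ⟨A.length, B.length, by rw [← length_append, hperm.length_eq], by omega⟩

end Dist

theorem opk_perm (k : ℕ) (l : List ℕ) : opk k l ~ l.map (fun x => Nat.dist x k) :=
  perm_insertionSort _ _

theorem exists_sum_take_opk_le {M : List ℕ} (hM : M.Pairwise (· ≥ ·)) (k i : ℕ) :
    ∃ a b, a + b ≤ i ∧ a + b ≤ M.length ∧
      ((opk k M).take i).sum + a * k + (M.drop (M.length - b)).sum ≤
        (M.take a).sum + b * k := by
  obtain ⟨s, hperm, hs⟩ : (opk k M).take i <+~ M.map (fun x => Nat.dist x k) :=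
    (take_sublist _ _).subperm.trans (opk_perm k M).subperm
  obtain ⟨t, ht, rfl⟩ := sublist_map_iff.mp hs
  obtain ⟨a, b, hab, hle⟩ := ht.exists_sum_map_dist_le k hM
  have hlen : t.length = min i M.length := by
    simpa [(opk_perm k M).length_eq] using hperm.length_eq
  exact ⟨a, b, by omega, by omega, by rwa [← hperm.sum_eq]⟩

theorem sum_take_add_le_sum_take_opk (k : ℕ) {L : List ℕ} {a b : ℕ} (hab : a + b ≤ L.length) :
    (L.take a).sum + b * k ≤
      ((opk k L).take (a + b)).sum + a * k + (L.drop (L.length - b)).sum := by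
  set A := L.take a
  set B := L.drop (L.length - b)
  have hAlen : A.length = a := by simp [A]; omega
  have hBlen : B.length = b := by simp [B]; omega
  have hsub : A ++ B <+ L :=
    calc A ++ B <+ L.take (L.length - b) ++ B :=
          (take_sublist_take_left (by omega)).append (Sublist.refl B)
      _ = L := take_append_drop _ _
  have htop := ((hsub.map (fun x => Nat.dist x k)).subperm.trans
    (opk_perm k L).symm.subperm).sum_le_sum_take (pairwise_opk k L)
  simp only [map_append, sum_append, length_map, length_append, hAlen, hBlen] at htop
  have hA := sum_le_sum_map_dist_add k A
  have hB := length_mul_le_sum_map_dist_add k B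
  rw [hAlen] at hA
  rw [hBlen] at hB
  omega

theorem Dominates.sum_drop_le_s1 {L M : List ℕ} (h : Dominates L M) (hsum : L.sum = M.sum)
    (i : ℕ) :
    (L.drop i).sum ≤ (M.drop i).sum := by
  have := h i
  have := sum_take_add_sum_drop L i
  have := sum_take_add_sum_drop M i
  omega

theorem dominates_opk {L M : List ℕ} (h : Dominates L M)
    (hM : M.Pairwise (· ≥ ·)) (hlen : L.length = M.length) (hsum : L.sum = M.sum) (k : ℕ) :
    Dominates (opk k L) (opk k M) := by
  intro i
  obtain ⟨a, b, hi, hab, hM_le⟩ := exists_sum_take_opk_le hM k i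
  have hL_ge := sum_take_add_le_sum_take_opk k (show a + b ≤ L.length by omega)
  have htop := h a
  have hbot := h.sum_drop_le_s1 hsum (M.length - b)
  have hmono : ((opk k L).take (a + b)).sum ≤ ((opk k L).take i).sum :=
    monotone_sum_take _ hi
  rw [hlen] at hL_ge
  omega

theorem sum_take_append_replicate_zero (l : List ℕ) (r i : ℕ) :
    ((l ++ replicate r 0).take i).sum = (l.take i).sum := by
  simp [take_append]

theorem Dominates.append_replicate_zero {l m : List ℕ} (h : Dominates l m) (r s : ℕ) :
    Dominates (l ++ replicate r 0) (m ++ replicate s 0) := fun i => by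
  simpa only [sum_take_append_replicate_zero] using h i

theorem pairwise_ge_append_replicate_zero {l : List ℕ} (h : l.Pairwise (· ≥ ·)) (r : ℕ) :
    (l ++ replicate r 0).Pairwise (· ≥ ·) :=
  pairwise_append.mpr ⟨h, pairwise_replicate.mpr (Or.inr le_rfl),
    fun _ _ _ hb => (eq_of_mem_replicate hb).symm ▸ Nat.zero_le _⟩

theorem opk_dominance_of_covers_general
    (n ℓ : ℕ) (l m : List ℕ)
    (hlsum : l.sum = n)
    (hmsort : m.Pairwise (· ≥ ·)) (hmsum : m.sum = n)
    (hdom : Dominates l m)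
    (hllen : l.length ≤ ℓ) (hmlen : m.length ≤ ℓ)
    (k : ℕ) :
    Dominates (opk k (l ++ List.replicate (ℓ - l.length) 0))
              (opk k (m ++ List.replicate (ℓ - m.length) 0)) :=
  dominates_opk (hdom.append_replicate_zero _ _) (pairwise_ge_append_replicate_zero hmsort _)
    (by simp; omega) (by simp [hlsum, hmsum]) k

theorem opk_dominance_of_covers
    (n ℓ : ℕ) (l m : List ℕ)
    (hlsort : l.Pairwise (· ≥ ·)) (hlpos : ∀ x ∈ l, 0 < x) (hlsum : l.sum = n)
    (hmsort : m.Pairwise (· ≥ ·)) (hmpos : ∀ x ∈ m, 0 < x) (hmsum : m.sum = n)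
    (hdom : Dominates l m) (hne : l ≠ m)
    (hcov : ∀ ν : List ℕ, ν.Pairwise (· ≥ ·) → (∀ x ∈ ν, 0 < x) → ν.sum = n →
      Dominates l ν → Dominates ν m → ν = l ∨ ν = m)
    (hllen : l.length ≤ ℓ) (hmlen : m.length ≤ ℓ)
    (k : ℕ) (hk : 0 < k) :
    Dominates (opk k (l ++ List.replicate (ℓ - l.length) 0))
              (opk k (m ++ List.replicate (ℓ - m.length) 0)) :=
  opk_dominance_of_covers_general n ℓ l m hlsum hmsort hmsum hdom hllen hmlen k
end

section
/- Let μ = (μ_1,…,μ_ℓ) be a non-increasing sequence of non-negative integers, let 1 ≤ i < j ≤ ℓ, and suppose λ defined by λ_i = μ_i + 1, λ_j = μ_j − 1 (with μ_j ≥ 1) and λ_p = μ_p for p ∉ {i,j} is non-increasing. If k is a positive integer with k < μ_j, then λ^(k) dominates μ^(k). -/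
/-!
Write `a = μᵢ - k` and `b = μⱼ - k`. Since `k < μⱼ ≤ μᵢ`, the values `|λₚ - k|` are the values
`|μₚ - k|` with one copy of `a` replaced by `a + 1` and one copy of `b ≤ a` by `b - 1`. Such a
transfer from a smaller to a larger value can only raise sums of largest entries: every
sub-multiset `T` of the old values is matched by a sub-multiset `S` of the new ones with
`#S ≤ #T` and `∑ T ≤ ∑ S`. The first `n` entries of a non-increasing list have the largest sum
among its sub-multisets of size at most `n`, so the matching yields the dominance.
-/

namespace List

theorem sum_take_le_sum_take_cons {l : List ℕ} {x : ℕ} (hx : ∀ y ∈ l, y ≤ x) (n : ℕ) :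
    (l.take n).sum ≤ ((x :: l).take n).sum := by
  cases n with
  | zero => simp
  | succ n =>
    rw [take_succ_cons, sum_cons]
    rcases lt_or_ge n l.length with hn | hn
    · rw [sum_take_succ _ _ hn]
      have := hx _ (getElem_mem hn)
      omega
    · rw [take_of_length_le (by omega), take_of_length_le hn]
      omega

theorem Sublist.sum_le_sum_take_s6 {s l : List ℕ} (hl : l.Pairwise (· ≥ ·)) (hs : s <+ l) {n : ℕ}
    (hn : s.length ≤ n) : s.sum ≤ (l.take n).sum := by
  induction hs generalizing n with
  | slnil => simp
  | cons x _ ih =>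
    exact (ih hl.of_cons hn).trans
      (sum_take_le_sum_take_cons (fun _ hy => rel_of_pairwise_cons hl hy) n)
  | cons_cons x _ ih =>
    cases n with
    | zero => simp at hn
    | succ n => simpa using ih hl.of_cons (by simpa using hn)

theorem coe_set_eq_cons {α : Type*} {l : List α} {i : ℕ} (hi : i < l.length) (x : α) :
    ((l.set i x : List α) : Multiset α) = x ::ₘ (l.eraseIdx i : List α) := by
  have h := getElem_cons_eraseIdx_perm (l := l.set i x) (n := i) (by simpa)
  rw [getElem_set_self, eraseIdx_set_eq] at h
  exact (Multiset.coe_eq_coe.mpr h).symm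

theorem coe_set_set {α : Type*} {l : List α} {i j : ℕ} (hij : i < j) (hj : j < l.length)
    (x y : α) :
    (((l.set i x).set j y : List α) : Multiset α) =
      x ::ₘ y ::ₘ ((l.eraseIdx j).eraseIdx i : List α) := by
  rw [coe_set_eq_cons (by simpa), eraseIdx_set_gt hij,
    coe_set_eq_cons (by simp [length_eraseIdx_of_lt hj]; omega), Multiset.cons_swap]

theorem coe_eq_cons_cons {α : Type*} {l : List α} {i j : ℕ} (hij : i < j) (hj : j < l.length) :
    (l : Multiset α) = l[i] ::ₘ l[j] ::ₘ ((l.eraseIdx j).eraseIdx i : List α) := by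
  have h := coe_set_set hij hj l[i] l[j]
  rwa [set_getElem_self, set_getElem_self] at h

end List

namespace Multiset

theorem sum_le_sum_take_s6 {l : List ℕ} (hl : l.Pairwise (· ≥ ·)) {s : Multiset ℕ} (hs : s ≤ l)
    {n : ℕ} (hn : card s ≤ n) : s.sum ≤ (l.take n).sum := by
  obtain ⟨s, rfl⟩ := Quot.exists_rep s
  obtain ⟨s', hperm, hsub⟩ := coe_le.mp hs
  rw [quot_mk_to_coe'', sum_coe, ← hperm.sum_eq]
  exact hsub.sum_le_sum_take_s6 hl (by simpa [hperm.length_eq] using hn)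

theorem le_cons_or_exists_eq_cons {α : Type*} {s t : Multiset α} {a : α} (h : s ≤ a ::ₘ t) :
    s ≤ t ∨ ∃ u ≤ t, s = a ::ₘ u := by
  classical
  by_cases ha : a ∈ s
  · exact Or.inr ⟨s.erase a, by simpa using erase_le_erase a h, (cons_erase ha).symm⟩
  · exact Or.inl ((le_cons_of_notMem ha).mp h)

theorem exists_le_transfer {a b : ℕ} (hba : b ≤ a + 1) {r T : Multiset ℕ}
    (hT : T ≤ a ::ₘ b ::ₘ r) :
    ∃ S ≤ (a + 1) ::ₘ (b - 1) ::ₘ r, card S ≤ card T ∧ T.sum ≤ S.sum := by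
  have hr : r ≤ (b - 1) ::ₘ r := le_cons_self _ _
  rcases le_cons_or_exists_eq_cons hT with hT | ⟨U, hU, rfl⟩
  · rcases le_cons_or_exists_eq_cons hT with hT | ⟨U, hU, rfl⟩
    · exact ⟨T, hT.trans (hr.trans (le_cons_self _ _)), le_rfl, le_rfl⟩
    · exact ⟨(a + 1) ::ₘ U, cons_le_cons _ (hU.trans hr), by simp, by simp; omega⟩
  · rcases le_cons_or_exists_eq_cons hU with hU | ⟨V, hV, rfl⟩
    · exact ⟨(a + 1) ::ₘ U, cons_le_cons _ (hU.trans hr), by simp, by simp⟩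
    · exact ⟨(a + 1) ::ₘ (b - 1) ::ₘ V, cons_le_cons _ (cons_le_cons _ hV), by simp,
        by simp; omega⟩

end Multiset

open Multiset in
theorem dominates_insertionSort_of_forall_le {l m : List ℕ}
    (h : ∀ T ≤ (m : Multiset ℕ), ∃ S ≤ (l : Multiset ℕ), card S ≤ card T ∧ T.sum ≤ S.sum) :
    Dominates (l.insertionSort (· ≥ ·)) (m.insertionSort (· ≥ ·)) := by
  intro n
  have hT : (((m.insertionSort (· ≥ ·)).take n : List ℕ) : Multiset ℕ) ≤ m :=
    coe_le.mpr ((List.take_sublist _ _).subperm.trans (List.perm_insertionSort _ _).subperm)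
  obtain ⟨S, hS, hcard, hsum⟩ := h _ hT
  rw [← coe_eq_coe.mpr (List.perm_insertionSort (· ≥ ·) l)] at hS
  calc ((m.insertionSort (· ≥ ·)).take n).sum ≤ S.sum := by rwa [← sum_coe]
    _ ≤ ((l.insertionSort (· ≥ ·)).take n).sum :=
      sum_le_sum_take_s6 (List.pairwise_insertionSort _ _) hS
        (hcard.trans (by simp))

theorem opk_dominance_case_k_lt_general
    (μ : List ℕ) (hμsort : μ.Pairwise (· ≥ ·))
    (i j : ℕ) (hij : i < j) (hj : j < μ.length)
    (lam : List ℕ)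
    (hlam : lam = (μ.set i (μ.getD i 0 + 1)).set j (μ.getD j 0 - 1))
    (k : ℕ) (hkμ : k < μ.getD j 0) :
    Dominates (opk k lam) (opk k μ) := by
  have hi : i < μ.length := hij.trans hj
  rw [List.getD_eq_getElem _ _ hi, List.getD_eq_getElem _ _ hj] at hlam
  rw [List.getD_eq_getElem _ _ hj] at hkμ
  have hji : μ[j] ≤ μ[i] := hμsort.rel_get_of_lt (a := ⟨i, hi⟩) (b := ⟨j, hj⟩) hij
  set f : ℕ → ℕ := fun x => Nat.dist x k
  have hf {x : ℕ} (hx : k ≤ x) : f x = x - k := Nat.dist_eq_sub_of_le_right hx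
  have hfi : f (μ[i] + 1) = f μ[i] + 1 := by rw [hf (by omega), hf (by omega)]; omega
  have hfj : f (μ[j] - 1) = f μ[j] - 1 := by rw [hf (by omega), hf (by omega)]; omega
  have hj' : j < (μ.map f).length := by simpa
  have hlam_map : lam.map f = ((μ.map f).set i (f μ[i] + 1)).set j (f μ[j] - 1) := by
    rw [hlam, List.map_set, List.map_set, hfi, hfj]
  have hfji : f μ[j] ≤ f μ[i] + 1 := by rw [hf (by omega), hf (by omega)]; omega
  unfold opk
  refine dominates_insertionSort_of_forall_le fun T hT => ?_
  rw [List.coe_eq_cons_cons hij hj', List.getElem_map, List.getElem_map] at hT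
  rw [hlam_map, List.coe_set_set hij hj']
  exact Multiset.exists_le_transfer hfji hT

theorem opk_dominance_case_k_lt
    (μ : List ℕ) (hμsort : μ.Pairwise (· ≥ ·))
    (i j : ℕ) (hij : i < j) (hj : j < μ.length)
    (hpos : 1 ≤ μ.getD j 0)
    (lam : List ℕ)
    (hlam : lam = (μ.set i (μ.getD i 0 + 1)).set j (μ.getD j 0 - 1))
    (hlamsort : lam.Pairwise (· ≥ ·))
    (k : ℕ) (hk : 0 < k) (hkμ : k < μ.getD j 0) :
    Dominates (opk k lam) (opk k μ) :=
  opk_dominance_case_k_lt_general μ hμsort i j hij hj lam hlam k hkμ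
end

section
/- Let μ = (μ_1,…,μ_ℓ) be a non-increasing sequence of non-negative integers, let 1 ≤ i < j ≤ ℓ, and suppose λ defined by λ_i = μ_i + 1, λ_j = μ_j − 1 (with μ_j ≥ 1) and λ_p = μ_p for p ∉ {i,j} is non-increasing. If k is a positive integer with k = μ_j < μ_i, then λ^(k) dominates μ^(k); moreover λ^(k) is obtained from μ^(k) by replacing the first occurrence of μ_i − k by μ_i − k + 1 and the first occurrence of 0 by 1, and re-sorting in non-increasing order. -/
namespace List

variable {α : Type*} [BEq α] [LawfulBEq α]

theorem replace_cons_of_ne {x a b : α} (h : x ≠ a) (l : List α) :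
    (x :: l).replace a b = x :: l.replace a b := by
  rw [replace_cons, beq_false_of_ne (Ne.symm h)]

theorem replace_perm_cons_erase {a b : α} : ∀ {l : List α}, a ∈ l → l.replace a b ~ b :: l.erase a
  | x :: l, h => by
    by_cases hx : x = a
    · subst hx
      rw [replace_cons_self, erase_cons_head]
    · rw [replace_cons_of_ne hx, erase_cons_tail (by simpa using hx)]
      have ha : a ∈ l := (mem_cons.1 h).resolve_left (Ne.symm hx)
      exact ((replace_perm_cons_erase ha).cons x).trans (Perm.swap b x _)

theorem mem_of_mem_replace {y a b : α} {l : List α} (h : y ∈ l.replace a b) : y = b ∨ y ∈ l := by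
  by_cases ha : a ∈ l
  · rcases mem_cons.1 ((replace_perm_cons_erase ha).subset h) with rfl | h
    · exact Or.inl rfl
    · exact Or.inr (erase_subset h)
  · rw [replace_of_not_mem ha] at h
    exact Or.inr h

theorem Perm.set_perm_replace {l s : List α} (h : l ~ s) {n : ℕ} (hn : n < l.length) (b : α) :
    l.set n b ~ s.replace l[n] b := by
  have hmem : l[n] ∈ s := h.subset (getElem_mem hn)
  have herase : l.eraseIdx n ~ s.erase l[n] :=
    (((getElem_cons_eraseIdx_perm hn).trans h).trans (perm_cons_erase hmem)).cons_inv
  exact ((set_perm_cons_eraseIdx hn b).trans (herase.cons b)).trans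
    (replace_perm_cons_erase hmem).symm

end List

theorem List.Pairwise.replace_add_one (a : ℕ) :
    ∀ {l : List ℕ}, l.Pairwise (· ≥ ·) → (l.replace a (a + 1)).Pairwise (· ≥ ·)
  | [], _ => by simp
  | x :: l, h => by
    rw [List.pairwise_cons] at h
    by_cases hx : x = a
    · subst hx
      rw [List.replace_cons_self, List.pairwise_cons]
      exact ⟨fun y hy => Nat.le_succ_of_le (h.1 y hy), h.2⟩
    · rw [List.replace_cons_of_ne hx, List.pairwise_cons]
      refine ⟨fun y hy => ?_, replace_add_one a h.2⟩
      by_cases ha : a ∈ l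
      · -- entries before the first `a` are `≥ a` and `≠ a`, hence `≥ a + 1`
        rcases List.mem_of_mem_replace hy with rfl | hy
        · have := h.1 a ha; omega
        · exact h.1 y hy
      · rw [List.replace_of_not_mem ha] at hy
        exact h.1 y hy

namespace Dominates

theorem refl (l : List ℕ) : Dominates l l := fun _ => le_rfl

theorem trans {l m n : List ℕ} (hlm : Dominates l m) (hmn : Dominates m n) : Dominates l n :=
  fun i => (hmn i).trans (hlm i)

theorem cons {x y : ℕ} {l m : List ℕ} (hxy : y ≤ x) (h : Dominates l m) :
    Dominates (x :: l) (y :: m)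
  | 0 => le_rfl
  | i + 1 => by
    simp only [List.take_succ_cons, List.sum_cons]
    exact Nat.add_le_add hxy (h i)

theorem replace_of_le {a b : ℕ} (hab : a ≤ b) : ∀ l : List ℕ, Dominates (l.replace a b) l
  | [] => refl []
  | x :: l => by
    by_cases hx : x = a
    · subst hx
      rw [List.replace_cons_self]
      exact cons hab (refl l)
    · rw [List.replace_cons_of_ne hx]
      exact cons le_rfl (replace_of_le hab l)

end Dominates

theorem opk_eq_of_perm {k : ℕ} {l s : List ℕ} (hperm : (l.map (fun x => Nat.dist x k)).Perm s)
    (hs : s.Pairwise (· ≥ ·)) : opk k l = s :=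
  ((List.perm_insertionSort _ _).trans hperm).eq_of_pairwise' (List.pairwise_insertionSort _ _) hs

theorem opk_dominance_case_k_eq_muj_general
    (μ : List ℕ)
    (i j : ℕ) (hij : i < j) (hj : j < μ.length)
    (lam : List ℕ)
    (hlam : lam = (μ.set i (μ.getD i 0 + 1)).set j (μ.getD j 0 - 1))
    (k : ℕ) (hk : 0 < k) (hkj : k = μ.getD j 0) (hki : k < μ.getD i 0) :
    Dominates (opk k lam) (opk k μ) ∧
      opk k lam
        = ((((opk k μ).replace (μ.getD i 0 - k) (μ.getD i 0 - k + 1)).replace 0 1).insertionSort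
            (· ≥ ·)) := by
  set f : ℕ → ℕ := fun x => Nat.dist x k
  set c := μ.getD i 0 - k
  have hi : i < μ.length := hij.trans hj
  have hfi : (μ.map f)[i]'(by simpa using hi) = c := by
    simp only [List.getElem_map, ← List.getD_eq_getElem μ 0 hi, f, Nat.dist]; omega
  have hfj : ((μ.map f).set i (c + 1))[j]'(by simpa using hj) = 0 := by
    simp only [List.getElem_set_ne hij.ne, List.getElem_map, ← List.getD_eq_getElem μ 0 hj, f,
      Nat.dist]; omega
  have hmap : lam.map f = ((μ.map f).set i (c + 1)).set j 1 := by
    simp only [hlam, List.map_set, f, Nat.dist]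
    congr 2 <;> omega
  have hperm : (lam.map f).Perm (((opk k μ).replace c (c + 1)).replace 0 1) := by
    rw [hmap, ← hfj]
    refine List.Perm.set_perm_replace ?_ _ 1
    rw [← hfi]
    exact (List.perm_insertionSort _ _).symm.set_perm_replace _ _
  have hsorted : (((opk k μ).replace c (c + 1)).replace 0 1).Pairwise (· ≥ ·) :=
    ((List.pairwise_insertionSort _ _).replace_add_one c).replace_add_one 0
  rw [hsorted.insertionSort_eq, opk_eq_of_perm hperm hsorted]
  exact ⟨(Dominates.replace_of_le zero_le_one _).trans (Dominates.replace_of_le c.le_succ _), rfl⟩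

theorem opk_dominance_case_k_eq_muj
    (μ : List ℕ) (hμsort : μ.Pairwise (· ≥ ·))
    (i j : ℕ) (hij : i < j) (hj : j < μ.length)
    (hpos : 1 ≤ μ.getD j 0)
    (lam : List ℕ)
    (hlam : lam = (μ.set i (μ.getD i 0 + 1)).set j (μ.getD j 0 - 1))
    (hlamsort : lam.Pairwise (· ≥ ·))
    (k : ℕ) (hk : 0 < k) (hkj : k = μ.getD j 0) (hki : k < μ.getD i 0) :
    Dominates (opk k lam) (opk k μ) ∧
      opk k lam
        = ((((opk k μ).replace (μ.getD i 0 - k) (μ.getD i 0 - k + 1)).replace 0 1).insertionSort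
            (· ≥ ·)) :=
  opk_dominance_case_k_eq_muj_general μ i j hij hj lam hlam k hk hkj hki
end

section
/- Let μ = (μ_1,…,μ_ℓ) be a non-increasing sequence of non-negative integers, let 1 ≤ i < j ≤ ℓ, and suppose λ defined by λ_i = μ_i + 1, λ_j = μ_j − 1 (with μ_j ≥ 1) and λ_p = μ_p for p ∉ {i,j} is non-increasing. If k is a positive integer with k = μ_j = μ_i, then the multiset {|λ_p − k|} is obtained from the multiset {|μ_p − k|} by replacing two copies of 0 by two copies of 1; in particular λ^(k) dominates μ^(k). -/
namespace List

variable {α β : Type*}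

theorem Forall₂.countP_le {R : α → β → Prop} {p : α → Bool} {q : β → Bool}
    (hpq : ∀ a b, R a b → p a → q b) {l₁ : List α} {l₂ : List β} (h : Forall₂ R l₁ l₂) :
    l₁.countP p ≤ l₂.countP q := by
  induction h with
  | nil => rfl
  | @cons a b _ _ hab _ ih =>
    simp only [countP_cons]
    have := hpq a b hab
    split_ifs <;> grind

theorem forall₂_set_set {R : α → α → Prop} [Std.Refl R] {l : List α} {i j : ℕ} {a b : α}
    (hi : ∀ h : i < l.length, R l[i] a) (hj : ∀ h : j < l.length, R l[j] b) :
    Forall₂ R l ((l.set i a).set j b) := by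
  refine forall₂_of_length_eq_of_get (by simp) fun n h₁ _ => ?_
  simp only [get_eq_getElem, getElem_set]
  split_ifs with hjn hin
  · subst hjn; exact hj h₁
  · subst hin; exact hi h₁
  · exact refl _

theorem sum_take_add_one_eq_add_getD {M : Type*} [AddMonoid M] (l : List M) (i : ℕ) :
    (l.take (i + 1)).sum = (l.take i).sum + l.getD i 0 := by
  rw [take_add_one, sum_append, getD_eq_getElem?_getD]
  cases l[i]? <;> simp

end List

namespace Multiset

variable {α : Type*} [DecidableEq α]

theorem coe_set {l : List α} {n : ℕ} (hn : n < l.length) (a : α) :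
    (l.set n a : Multiset α) = a ::ₘ (l : Multiset α).erase l[n] := by
  have hset : (l.set n a : Multiset α) = a ::ₘ (l.eraseIdx n : Multiset α) :=
    coe_eq_coe.2 (List.set_perm_cons_eraseIdx hn a)
  have hl : (l : Multiset α) = l[n] ::ₘ (l.eraseIdx n : Multiset α) :=
    (coe_eq_coe.2 (List.getElem_cons_eraseIdx_perm hn)).symm
  rw [hset, hl, erase_cons_head]

theorem coe_set_set_of_getElem_eq {l : List α} {i j : ℕ} (hij : i ≠ j) (hi : i < l.length)
    (hj : j < l.length) {a b c : α} (hli : l[i] = a) (hlj : l[j] = a) (hb : b ≠ a) :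
    ((l.set i b).set j c : Multiset α) = ((l : Multiset α).erase a).erase a + {b, c} := by
  have hlj' : (l.set i b)[j]'(by simpa using hj) = a := by
    rw [List.getElem_set_ne hij]; exact hlj
  rw [coe_set (by simpa using hj), hlj', coe_set hi, hli, erase_cons_tail _ hb,
    insert_eq_cons, ← singleton_add, ← singleton_add, ← singleton_add]
  abel

end Multiset

theorem le_getD_iff_lt_countP {l : List ℕ} (hl : l.Pairwise (· ≥ ·)) {t : ℕ} (ht : 0 < t)
    (n : ℕ) : t ≤ l.getD n 0 ↔ n < l.countP (t ≤ ·) := by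
  induction l generalizing n with
  | nil => simpa using ht.ne'
  | cons a l ih =>
    rw [List.pairwise_cons] at hl
    by_cases hta : t ≤ a
    · cases n with
      | zero => simp [hta]
      | succ n => rw [List.getD_cons_succ, ih hl.2, List.countP_cons]; simp [hta]
    · have hlt : ∀ x ∈ a :: l, x < t := by
        simp only [List.mem_cons, forall_eq_or_imp]
        exact ⟨by omega, fun x hx => by have := hl.1 x hx; omega⟩
      rw [List.countP_eq_zero.2 fun x hx => by simpa using hlt x hx]
      simp only [Nat.not_lt_zero, iff_false, not_le, List.getD_eq_getElem?_getD]
      cases h : (a :: l)[n]? with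
      | none => simpa using ht
      | some x => simpa using hlt x (List.mem_of_getElem? h)

theorem getD_le_getD_of_countP_le {l m : List ℕ} (hl : l.Pairwise (· ≥ ·))
    (hm : m.Pairwise (· ≥ ·)) (h : ∀ t, l.countP (t ≤ ·) ≤ m.countP (t ≤ ·)) (n : ℕ) :
    l.getD n 0 ≤ m.getD n 0 := by
  rcases Nat.eq_zero_or_pos (l.getD n 0) with h0 | hpos
  · rw [h0]; exact Nat.zero_le _
  · exact (le_getD_iff_lt_countP hm hpos n).2
      (((le_getD_iff_lt_countP hl hpos n).1 le_rfl).trans_le (h _))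

theorem dominates_of_getD_le {l m : List ℕ} (h : ∀ n, m.getD n 0 ≤ l.getD n 0) :
    Dominates l m := by
  intro i
  induction i with
  | zero => simp
  | succ i ih =>
    rw [List.sum_take_add_one_eq_add_getD, List.sum_take_add_one_eq_add_getD]
    exact add_le_add ih (h i)

theorem dominates_insertionSort_of_forall₂ {l m : List ℕ} (h : List.Forall₂ (· ≤ ·) m l) :
    Dominates (l.insertionSort (· ≥ ·)) (m.insertionSort (· ≥ ·)) := by
  refine dominates_of_getD_le <| getD_le_getD_of_countP_le (List.pairwise_insertionSort _ _)
    (List.pairwise_insertionSort _ _) fun t => ?_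
  rw [(List.perm_insertionSort _ _).countP_eq, (List.perm_insertionSort _ _).countP_eq]
  exact h.countP_le fun a b hab hta => by simp only [decide_eq_true_eq] at hta ⊢; omega

theorem opk_dominance_case_k_eq_mui_eq_muj_general
    (μ : List ℕ)
    (i j : ℕ) (hij : i < j) (hj : j < μ.length)
    (lam : List ℕ)
    (hlam : lam = (μ.set i (μ.getD i 0 + 1)).set j (μ.getD j 0 - 1))
    (k : ℕ) (hk : 0 < k) (hkj : k = μ.getD j 0) (hki : k = μ.getD i 0) :
    (↑(lam.map (fun x => Nat.dist x k)) : Multiset ℕ)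
        = ((↑(μ.map (fun x => Nat.dist x k)) : Multiset ℕ).erase 0).erase 0 + {1, 1} ∧
      Dominates (opk k lam) (opk k μ) := by
  have hi : i < μ.length := hij.trans hj
  have hμi : μ[i] = k := by rw [hki, List.getD_eq_getElem _ _ hi]
  have hμj : μ[j] = k := by rw [hkj, List.getD_eq_getElem _ _ hj]
  set T := μ.map (Nat.dist · k)
  have hTi : T[i]'(by simpa [T]) = 0 := by simp [T, hμi]
  have hTj : T[j]'(by simpa [T]) = 0 := by simp [T, hμj]
  have hmap : lam.map (Nat.dist · k) = (T.set i 1).set j 1 := by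
    rw [hlam, List.map_set, List.map_set, ← hki, ← hkj]
    simp only [Nat.dist]
    congr <;> omega
  refine ⟨?_, ?_⟩
  · rw [hmap]
    exact Multiset.coe_set_set_of_getElem_eq hij.ne _ _ hTi hTj one_ne_zero
  · refine dominates_insertionSort_of_forall₂ (hmap ▸ List.forall₂_set_set ?_ ?_)
    · exact fun _ => hTi ▸ zero_le_one
    · exact fun _ => hTj ▸ zero_le_one

theorem opk_dominance_case_k_eq_mui_eq_muj
    (μ : List ℕ) (hμsort : μ.Pairwise (· ≥ ·))
    (i j : ℕ) (hij : i < j) (hj : j < μ.length)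
    (hpos : 1 ≤ μ.getD j 0)
    (lam : List ℕ)
    (hlam : lam = (μ.set i (μ.getD i 0 + 1)).set j (μ.getD j 0 - 1))
    (hlamsort : lam.Pairwise (· ≥ ·))
    (k : ℕ) (hk : 0 < k) (hkj : k = μ.getD j 0) (hki : k = μ.getD i 0) :
    (↑(lam.map (fun x => Nat.dist x k)) : Multiset ℕ)
        = ((↑(μ.map (fun x => Nat.dist x k)) : Multiset ℕ).erase 0).erase 0 + {1, 1} ∧
      Dominates (opk k lam) (opk k μ) :=
  opk_dominance_case_k_eq_mui_eq_muj_general μ i j hij hj lam hlam k hk hkj hki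
end

section
/- Let μ = (μ_1,…,μ_ℓ) be a non-increasing sequence of non-negative integers, let 1 ≤ i < j ≤ ℓ, and suppose λ defined by λ_i = μ_i + 1, λ_j = μ_j − 1 (with μ_j ≥ 1) and λ_p = μ_p for p ∉ {i,j} is non-increasing. If k is a positive integer with μ_j < k ≤ μ_i, then λ^(k) dominates μ^(k). -/
namespace List

section OrderedMonoid

variable {α : Type*} [AddCommMonoid α] [PartialOrder α] [IsOrderedAddMonoid α]

theorem sum_take_succ_le_add_sum_take {a : α} :
    ∀ {L : List α} {n : ℕ}, n < L.length → (∀ b ∈ L, b ≤ a) →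
      (L.take (n + 1)).sum ≤ a + (L.take n).sum
  | x :: _, 0, _, h => by simpa using h x mem_cons_self
  | x :: L, n + 1, hn, h => by
    have ih := sum_take_succ_le_add_sum_take (L := L) (by simpa using hn)
      fun b hb => h b (mem_cons_of_mem _ hb)
    simp only [take_succ_cons, sum_cons]
    grw [ih, add_left_comm]

theorem Sublist.sum_le_sum_take_of_pairwise {L M : List α} (h : M <+ L)
    (hL : L.Pairwise (· ≥ ·)) : M.sum ≤ (L.take M.length).sum := by
  induction h with
  | slnil => simp
  | @cons M L a hML ih =>
    obtain ⟨ha, hL⟩ := pairwise_cons.mp hL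
    cases M with
    | nil => simp
    | cons c M =>
      calc (c :: M).sum ≤ (L.take (M.length + 1)).sum := ih hL
        _ ≤ a + (L.take M.length).sum := sum_take_succ_le_add_sum_take hML.length_le ha
        _ = ((a :: L).take (c :: M).length).sum := by simp
  | cons_cons a _ ih =>
    simpa using add_le_add_right (ih (pairwise_cons.mp hL).2) a

theorem Subperm.sum_le_sum_take_of_pairwise {L M : List α} (h : M <+~ L)
    (hL : L.Pairwise (· ≥ ·)) : M.sum ≤ (L.take M.length).sum := by
  obtain ⟨M', hperm, hsub⟩ := h
  rw [← hperm.sum_eq, ← hperm.length_eq]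
  exact hsub.sum_le_sum_take_of_pairwise hL

end OrderedMonoid

theorem Forall₂.exists_sublist_of_sublist_left {α β : Type*} {R : α → β → Prop} :
    ∀ {l₁ l₂ l₁'}, Forall₂ R l₁ l₂ → l₁' <+ l₁ → ∃ l₂', l₂' <+ l₂ ∧ Forall₂ R l₁' l₂'
  | _, _, _, .nil, hs => ⟨[], nil_sublist _, by simp [sublist_nil.mp hs]⟩
  | _, _, _, .cons _ h, .cons _ hs =>
    let ⟨l₂', hsub, hR⟩ := h.exists_sublist_of_sublist_left hs
    ⟨l₂', hsub.cons _, hR⟩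
  | _, _, _, .cons hab h, .cons_cons _ hs =>
    let ⟨l₂', hsub, hR⟩ := h.exists_sublist_of_sublist_left hs
    ⟨_, hsub.cons_cons _, .cons hab hR⟩

end List

open List

theorem dominates_insertionSort_of_forall₂_s9 {A B : List ℕ} (h : Forall₂ (· ≤ ·) A B) :
    Dominates (B.insertionSort (· ≥ ·)) (A.insertionSort (· ≥ ·)) := by
  intro t
  set sA := A.insertionSort (· ≥ ·)
  set sB := B.insertionSort (· ≥ ·)
  obtain ⟨A', hA'perm, hA'sub⟩ :=
    (take_sublist t sA).subperm.trans (perm_insertionSort _ A).subperm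
  obtain ⟨B', hB'sub, hR⟩ := h.exists_sublist_of_sublist_left hA'sub
  have hlen : B'.length ≤ t := by
    rw [← hR.length_eq, hA'perm.length_eq]
    exact length_take_le t sA
  calc (sA.take t).sum = A'.sum := hA'perm.sum_eq.symm
    _ ≤ B'.sum := hR.sum_le_sum
    _ ≤ (sB.take B'.length).sum :=
      (hB'sub.subperm.trans (perm_insertionSort _ B).symm.subperm).sum_le_sum_take_of_pairwise
        (pairwise_insertionSort _ B)
    _ ≤ (sB.take t).sum := (take_sublist_take_left hlen).sum_le_sum fun _ _ => Nat.zero_le _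

theorem dominates_opk_of_forall₂ {k : ℕ} {μ lam : List ℕ}
    (h : Forall₂ (fun a b => a.dist k ≤ b.dist k) μ lam) : Dominates (opk k lam) (opk k μ) :=
  dominates_insertionSort_of_forall₂_s9 <| by
    rwa [forall₂_map_left_iff, forall₂_map_right_iff]

theorem forall₂_dist_set_succ_set_pred {μ : List ℕ} {i j k : ℕ} (hkj : μ.getD j 0 < k)
    (hki : k ≤ μ.getD i 0) :
    Forall₂ (fun a b => a.dist k ≤ b.dist k) μ
      ((μ.set i (μ.getD i 0 + 1)).set j (μ.getD j 0 - 1)) := by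
  refine forall₂_of_length_eq_of_get (by simp) fun p hp _ => ?_
  simp only [get_eq_getElem, getElem_set]
  split_ifs with hj hi
  · subst hj
    rw [getD_eq_getElem _ _ hp] at hkj ⊢
    simp only [Nat.dist]
    omega
  · subst hi
    rw [getD_eq_getElem _ _ hp] at hki ⊢
    simp only [Nat.dist]
    omega
  · exact le_rfl

theorem opk_dominance_case_between_general
    (μ : List ℕ)
    (i j : ℕ)
    (lam : List ℕ)
    (hlam : lam = (μ.set i (μ.getD i 0 + 1)).set j (μ.getD j 0 - 1))
    (k : ℕ) (hkj : μ.getD j 0 < k) (hki : k ≤ μ.getD i 0) :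
    Dominates (opk k lam) (opk k μ) :=
  hlam ▸ dominates_opk_of_forall₂ (forall₂_dist_set_succ_set_pred hkj hki)

theorem opk_dominance_case_between
    (μ : List ℕ) (hμsort : μ.Pairwise (· ≥ ·))
    (i j : ℕ) (hij : i < j) (hj : j < μ.length)
    (hpos : 1 ≤ μ.getD j 0)
    (lam : List ℕ)
    (hlam : lam = (μ.set i (μ.getD i 0 + 1)).set j (μ.getD j 0 - 1))
    (hlamsort : lam.Pairwise (· ≥ ·))
    (k : ℕ) (hk : 0 < k) (hkj : μ.getD j 0 < k) (hki : k ≤ μ.getD i 0) :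
    Dominates (opk k lam) (opk k μ) :=
  opk_dominance_case_between_general μ i j lam hlam k hkj hki
end

section
/- Let μ = (μ_1,…,μ_ℓ) be a non-increasing sequence of non-negative integers, let 1 ≤ i < j ≤ ℓ, and suppose λ defined by λ_i = μ_i + 1, λ_j = μ_j − 1 (with μ_j ≥ 1) and λ_p = μ_p for p ∉ {i,j} is non-increasing. If k is a positive integer with k > μ_i, then λ^(k) dominates μ^(k). -/
open Finset

theorem Finset.sum_le_sum_of_eq_off_pair {ι M : Type*} [DecidableEq ι] [AddCommMonoid M]
    [PartialOrder M] [IsOrderedAddMonoid M] {s : Finset ι} {f g : ι → M} {p q : ι}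
    (hp : p ∈ s) (hq : q ∈ s) (hpq : p ≠ q) (hfg : ∀ r ∈ s, r ≠ p → r ≠ q → f r = g r)
    (h : f p + f q ≤ g p + g q) :
    ∑ r ∈ s, f r ≤ ∑ r ∈ s, g r := by
  have hq' : q ∈ s.erase p := mem_erase.2 ⟨hpq.symm, hq⟩
  rw [← add_sum_erase s f hp, ← add_sum_erase s g hp, ← add_sum_erase _ f hq',
    ← add_sum_erase _ g hq', ← add_assoc, ← add_assoc,
    sum_congr rfl fun r hr => hfg r (mem_of_mem_erase (mem_of_mem_erase hr))
      (ne_of_mem_erase (mem_of_mem_erase hr)) (ne_of_mem_erase hr)]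
  exact add_le_add_left h _

namespace List

theorem countP_take_of_pairwise {α : Type*} {R : α → α → Prop} {p : α → Bool}
    {l : List α} (hl : l.Pairwise R) (hp : ∀ x y, R x y → p y → p x) (n : ℕ) :
    (l.take n).countP p = min n (l.countP p) := by
  induction l generalizing n with
  | nil => simp
  | cons x t ih =>
    obtain ⟨hx, ht⟩ := pairwise_cons.mp hl
    cases n with
    | zero => simp
    | succ m =>
      by_cases hpx : p x
      · simp [hpx, ih ht, Nat.add_min_add_right]
      · have hpt : t.countP p = 0 :=
          countP_eq_zero.2 fun y hy hpy => hpx (hp x y (hx y hy) hpy)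
        have hpt' : (t.take m).countP p = 0 :=
          Nat.eq_zero_of_le_zero (hpt ▸ (take_sublist m t).countP_le)
        simp [hpx, hpt, hpt']

theorem sum_eq_sum_countP_le {l : List ℕ} {N : ℕ} (hN : ∀ x ∈ l, x ≤ N) :
    l.sum = ∑ r ∈ Icc 1 N, l.countP (r ≤ ·) := by
  induction l with
  | nil => simp
  | cons x t ih =>
    have hx : ∑ r ∈ Icc 1 N, (if r ≤ x then 1 else 0) = x := by
      have hxN := hN x mem_cons_self
      have hfilter : {r ∈ Icc 1 N | r ≤ x} = Icc 1 x := by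
        ext r
        simp only [Finset.mem_filter, mem_Icc]
        omega
      rw [← sum_filter, hfilter, sum_const, Nat.card_Icc, smul_eq_mul, mul_one, Nat.add_sub_cancel]
    simp only [sum_cons, countP_cons, sum_add_distrib, ih fun y hy => hN y (mem_cons_of_mem x hy)]
    simp only [decide_eq_true_eq, hx]
    omega

theorem sum_take_insertionSort_ge {l : List ℕ} {N : ℕ} (hN : ∀ x ∈ l, x ≤ N) (n : ℕ) :
    ((l.insertionSort (· ≥ ·)).take n).sum = ∑ r ∈ Icc 1 N, min n (l.countP (r ≤ ·)) := by
  have hperm := l.perm_insertionSort (· ≥ ·)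
  rw [sum_eq_sum_countP_le fun x hx => hN x (hperm.subset ((take_sublist n _).subset hx))]
  refine sum_congr rfl fun r _ => ?_
  have hup (x y : ℕ) (hxy : x ≥ y) (hry : decide (r ≤ y)) : decide (r ≤ x) :=
    decide_eq_true ((of_decide_eq_true hry).trans hxy)
  rw [countP_take_of_pairwise (l.pairwise_insertionSort (· ≥ ·)) hup, hperm.countP_eq]

theorem set_set_perm_cons_cons {α : Type*} {l : List α} {i j : ℕ} (hij : i < j)
    (hj : j < l.length) (x y : α) :
    ((l.set i x).set j y).Perm (x :: y :: (l.eraseIdx j).eraseIdx i) :=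
  calc (l.set i x).set j y
      _ ~ y :: (l.set i x).eraseIdx j := set_perm_cons_eraseIdx (by simpa using hj) y
      _ = y :: (l.eraseIdx j).set i x := by rw [eraseIdx_set_gt hij]
      _ ~ y :: x :: (l.eraseIdx j).eraseIdx i :=
        (set_perm_cons_eraseIdx (by rw [length_eraseIdx_of_lt hj]; omega) x).cons y
      _ ~ x :: y :: (l.eraseIdx j).eraseIdx i := Perm.swap x y _

end List

theorem dominates_insertionSort_of_transfer {u v rest : List ℕ} {a b : ℕ}
    (hu : u.Perm (a :: b :: rest)) (hv : v.Perm ((a - 1) :: (b + 1) :: rest))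
    (ha : 1 ≤ a) (hab : a ≤ b) :
    Dominates (v.insertionSort (· ≥ ·)) (u.insertionSort (· ≥ ·)) := by
  intro n
  set N := b + 1 + rest.sum
  have hrest : ∀ x ∈ rest, x ≤ N := fun x hx => by
    have := List.single_le_sum (fun _ _ => Nat.zero_le _) x hx
    omega
  have hle : ∀ {w : List ℕ} {c d : ℕ}, w.Perm (c :: d :: rest) → c ≤ b + 1 → d ≤ b + 1 →
      ∀ x ∈ w, x ≤ N := by
    intro w c d hw hc hd x hx
    simp only [hw.mem_iff, List.mem_cons] at hx
    rcases hx with rfl | rfl | hx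
    exacts [by omega, by omega, hrest x hx]
  rw [List.sum_take_insertionSort_ge (hle hu (by omega) (by omega)),
    List.sum_take_insertionSort_ge (hle hv (by omega) le_rfl)]
  simp only [hu.countP_eq, hv.countP_eq]
  have hrest_mono : rest.countP (b + 1 ≤ ·) ≤ rest.countP (a ≤ ·) :=
    List.countP_mono_left fun x _ hx => by simp only [decide_eq_true_eq] at hx ⊢; omega
  refine sum_le_sum_of_eq_off_pair (p := a) (q := b + 1) (mem_Icc.2 ⟨ha, by omega⟩)
    (mem_Icc.2 ⟨by omega, by omega⟩) (by omega) (fun r _ hra hrb => ?_) ?_ <;>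
  · simp only [List.countP_cons, decide_eq_true_eq]
    split_ifs <;> omega

theorem opk_dominates_of_transfer {μ lam rest : List ℕ} {x y k : ℕ}
    (hμ : μ.Perm (x :: y :: rest)) (hlam : lam.Perm ((x + 1) :: (y - 1) :: rest))
    (hy : 1 ≤ y) (hyx : y ≤ x) (hxk : x < k) :
    Dominates (opk k lam) (opk k μ) := by
  have hdist : ∀ z ≤ k, Nat.dist z k = k - z := fun z hz => Nat.dist_eq_sub_of_le hz
  refine dominates_insertionSort_of_transfer (rest := rest.map (Nat.dist · k))
    (a := k - x) (b := k - y) ?_ ?_ (by omega) (by omega)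
  · simpa only [List.map_cons, hdist x (by omega), hdist y (by omega)] using hμ.map (Nat.dist · k)
  · simpa only [List.map_cons, hdist (x + 1) (by omega), hdist (y - 1) (by omega),
      show k - (x + 1) = k - x - 1 by omega, show k - (y - 1) = k - y + 1 by omega]
      using hlam.map (Nat.dist · k)

theorem opk_dominance_case_k_gt_general
    (μ : List ℕ) (hμsort : μ.Pairwise (· ≥ ·))
    (i j : ℕ) (hij : i < j) (hj : j < μ.length)
    (hpos : 1 ≤ μ.getD j 0)
    (lam : List ℕ)
    (hlam : lam = (μ.set i (μ.getD i 0 + 1)).set j (μ.getD j 0 - 1))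
    (k : ℕ) (hki : μ.getD i 0 < k) :
    Dominates (opk k lam) (opk k μ) := by
  have hi : i < μ.length := hij.trans hj
  simp only [List.getD_eq_getElem μ 0 hi, List.getD_eq_getElem μ 0 hj] at hpos hlam hki
  subst hlam
  refine opk_dominates_of_transfer ?_ (List.set_set_perm_cons_cons hij hj _ _) hpos
    (List.pairwise_iff_getElem.mp hμsort i j hi hj hij) hki
  have := List.set_set_perm_cons_cons hij hj μ[i] μ[j]
  rwa [List.set_getElem_self, List.set_getElem_self] at this

theorem opk_dominance_case_k_gt
    (μ : List ℕ) (hμsort : μ.Pairwise (· ≥ ·))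
    (i j : ℕ) (hij : i < j) (hj : j < μ.length)
    (hpos : 1 ≤ μ.getD j 0)
    (lam : List ℕ)
    (hlam : lam = (μ.set i (μ.getD i 0 + 1)).set j (μ.getD j 0 - 1))
    (hlamsort : lam.Pairwise (· ≥ ·))
    (k : ℕ) (hk : 0 < k) (hki : μ.getD i 0 < k) :
    Dominates (opk k lam) (opk k μ) :=
  opk_dominance_case_k_gt_general μ hμsort i j hij hj hpos lam hlam k hki
end
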